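/- Let X be a complete CAT(0) space and A, B ⊆ X nonempty closed convex with S = {(a,b) ∈ A×B : d(a,b) = dist(A,B)} ≠ ∅. Define from x₀ the alternating projection sequences y_n = P_B(x_n), x_{n+1} = P_A(y_n). Then there exists (a,b) ∈ S such that (x_n) Δ-converges to a and (y_n) Δ-converges to b; if A or B is locally compact, the convergence is strong. -/

import Mathlib

/-!
Metric projections onto convex sets satisfy `d(x, P x)² + d(P x, b)² ≤ d(x, b)²` for `b` in the
set; combined with the quadrilateral inequality of CAT(0) spaces this makes them firmly
nonexpansive. A best approximation pair is a fixed pair, so the iterates of `PA ∘ PB` are Fejér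
monotone, and the decreasing gaps `d(x_n, y_n) ≥ d(y_n, x_{n+1}) ≥ …` force
`d(x_n, x_{n+1}) → 0`. Asymptotic centers of bounded sequences exist and are unique, and those of
subsequences are fixed points, so the iterates Δ-converge to a fixed point; firm nonexpansiveness
shows that every fixed pair is a best approximation pair. Under local compactness, a Fejér
monotone sequence cannot keep a positive distance to its Δ-limit.
-/

open Filter Topology Metric Set

/-- A (chosen) geodesic bicombing witnessing that `X` is a geodesic space:
`geo x y t` is the point at parameter fraction `t ∈ [0,1]` on a geodesic from `x` to `y`. -/
structure Geodesic (X : Type*) [MetricSpace X] where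
  geo : X → X → ℝ → X
  geo_zero : ∀ x y, geo x y 0 = x
  geo_one : ∀ x y, geo x y 1 = y
  geo_dist : ∀ x y : X, ∀ s ∈ Set.Icc (0:ℝ) 1, ∀ t ∈ Set.Icc (0:ℝ) 1,
    dist (geo x y s) (geo x y t) = |s - t| * dist x y
/-- `u` is an asymptotic center of the sequence `s`: it minimizes `y ↦ limsup dist y (s n)`. -/
def IsAsymptoticCenter {X : Type*} [MetricSpace X] (s : ℕ → X) (u : X) : Prop :=
  ∀ y : X, Filter.limsup (fun n => dist u (s n)) Filter.atTop ≤
    Filter.limsup (fun n => dist y (s n)) Filter.atTop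

/-- `s` Δ-converges to `u`: `u` is the unique asymptotic center of every subsequence. -/
def DeltaConvergesTo {X : Type*} [MetricSpace X] (s : ℕ → X) (u : X) : Prop :=
  ∀ φ : ℕ → ℕ, StrictMono φ →
    IsAsymptoticCenter (s ∘ φ) u ∧ ∀ v : X, IsAsymptoticCenter (s ∘ φ) v → v = u

/-- The CN (Bruhat–Tits) inequality characterizing CAT(0) among geodesic spaces. -/
def CAT0 (X : Type*) [MetricSpace X] : Prop :=
  ∀ x y z m : X, dist x m = dist x y / 2 → dist y m = dist x y / 2 →
    dist z m ^ 2 ≤ dist z x ^ 2 / 2 + dist z y ^ 2 / 2 - dist x y ^ 2 / 4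

section

open Function

variable {X : Type*} [MetricSpace X]

theorem Icc_subset_of_isClosed_of_midpoint_mem {S : Set ℝ} (hS : IsClosed S) {a b : ℝ}
    (ha : a ∈ S) (hb : b ∈ S) (hmid : ∀ x ∈ S, ∀ y ∈ S, (x + y) / 2 ∈ S) :
    Icc a b ⊆ S := by
  rintro t ⟨hat, htb⟩
  by_contra htS
  -- the gap of `S` around `t` would contain the midpoint of its two ends
  set l := sSup (S ∩ Icc a t)
  set r := sInf (S ∩ Icc t b)
  have hl : l ∈ S ∩ Icc a t := (hS.inter isClosed_Icc).csSup_mem ⟨a, ha, le_rfl, hat⟩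
    (bddAbove_Icc.mono inter_subset_right)
  have hr : r ∈ S ∩ Icc t b := (hS.inter isClosed_Icc).csInf_mem ⟨b, hb, htb, le_rfl⟩
    (bddBelow_Icc.mono inter_subset_right)
  have hlt : l < t := hl.2.2.lt_of_ne fun h => htS (h ▸ hl.1)
  have htr : t < r := hr.2.1.lt_of_ne' fun h => htS (h ▸ hr.1)
  have hm := hmid l hl.1 r hr.1
  rcases le_or_gt ((l + r) / 2) t with h | h
  · have : (l + r) / 2 ≤ l := le_csSup (bddAbove_Icc.mono inter_subset_right)
      (⟨hm, by linarith [hl.2.1], h⟩ : (l + r) / 2 ∈ S ∩ Icc a t)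
    linarith
  · have : r ≤ (l + r) / 2 := csInf_le (bddBelow_Icc.mono inter_subset_right)
      (⟨hm, h.le, by linarith [hr.2.2]⟩ : (l + r) / 2 ∈ S ∩ Icc t b)
    linarith

namespace Geodesic

variable (G : Geodesic X)

def IsConvex (A : Set X) : Prop :=
  ∀ x ∈ A, ∀ y ∈ A, ∀ t ∈ Icc (0 : ℝ) 1, G.geo x y t ∈ A

theorem dist_geo_left (x y : X) {t : ℝ} (ht : t ∈ Icc (0 : ℝ) 1) :
    dist x (G.geo x y t) = t * dist x y := by
  have h := G.geo_dist x y 0 ⟨le_rfl, zero_le_one⟩ t ht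
  rwa [G.geo_zero, zero_sub, abs_neg, abs_of_nonneg ht.1] at h

theorem dist_geo_right (x y : X) {t : ℝ} (ht : t ∈ Icc (0 : ℝ) 1) :
    dist (G.geo x y t) y = (1 - t) * dist x y := by
  have h := G.geo_dist x y t ht 1 ⟨zero_le_one, le_rfl⟩
  rwa [G.geo_one, abs_sub_comm, abs_of_nonneg (sub_nonneg.2 ht.2)] at h

theorem continuousOn_geo (x y : X) : ContinuousOn (G.geo x y) (Icc 0 1) :=
  (LipschitzOnWith.of_dist_le_mul (K := ⟨dist x y, dist_nonneg⟩) fun s hs t ht => by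
    rw [G.geo_dist x y s hs t ht, Real.dist_eq, mul_comm]; rfl).continuousOn

end Geodesic

namespace CAT0

theorem dist_geo_sq_le (hX : CAT0 X) (G : Geodesic X) (z x y : X) {t : ℝ}
    (ht : t ∈ Icc (0 : ℝ) 1) :
    dist z (G.geo x y t) ^ 2 ≤
      (1 - t) * dist z x ^ 2 + t * dist z y ^ 2 - t * (1 - t) * dist x y ^ 2 := by
  let S := {t ∈ Icc (0 : ℝ) 1 | dist z (G.geo x y t) ^ 2 ≤
      (1 - t) * dist z x ^ 2 + t * dist z y ^ 2 - t * (1 - t) * dist x y ^ 2}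
  suffices Icc 0 1 ⊆ S from (this ht).2
  refine Icc_subset_of_isClosed_of_midpoint_mem ?_ ?_ ?_ ?_
  · exact isClosed_Icc.isClosed_le
      ((continuous_const.dist continuous_id).comp_continuousOn (G.continuousOn_geo x y) |>.pow 2)
      (by fun_prop)
  · exact ⟨⟨le_rfl, zero_le_one⟩, by simp [G.geo_zero]⟩
  · exact ⟨⟨zero_le_one, le_rfl⟩, by simp [G.geo_one]⟩
  rintro s ⟨hs, hs'⟩ t ⟨ht, ht'⟩
  have hm : (s + t) / 2 ∈ Icc (0 : ℝ) 1 :=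
    ⟨by linarith [hs.1, ht.1], by linarith [hs.2, ht.2]⟩
  refine ⟨hm, ?_⟩
  have hst := G.geo_dist x y s hs t ht
  have h₁ : dist (G.geo x y s) (G.geo x y ((s + t) / 2)) =
      dist (G.geo x y s) (G.geo x y t) / 2 := by
    rw [G.geo_dist x y s hs _ hm, hst, show s - (s + t) / 2 = (s - t) / 2 by ring, abs_div,
      abs_two]
    ring
  have h₂ : dist (G.geo x y t) (G.geo x y ((s + t) / 2)) =
      dist (G.geo x y s) (G.geo x y t) / 2 := by
    rw [G.geo_dist x y t ht _ hm, hst, show t - (s + t) / 2 = -((s - t) / 2) by ring, abs_neg,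
      abs_div, abs_two]
    ring
  have hCN := hX _ _ z _ h₁ h₂
  rw [hst, mul_pow, sq_abs] at hCN
  linear_combination hCN + hs' / 2 + ht' / 2

/-- The quadrilateral inequality. Go from `b` to `c` through the point of `[a, d]` at parameter
`dist a b / (dist a b + dist c d)`: with these weights, the bounds of `dist_geo_sq_le` on the two
legs add up exactly to the right-hand side. -/
theorem dist_sq_add_dist_sq_le (hX : CAT0 X) (G : Geodesic X) (a b c d : X) :
    dist a d ^ 2 + dist b c ^ 2 ≤ dist a c ^ 2 + dist b d ^ 2 + 2 * dist a b * dist c d := by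
  rcases (dist_nonneg : 0 ≤ dist a b).eq_or_lt with hab | hq
  · obtain rfl : a = b := dist_eq_zero.1 hab.symm
    simp [add_comm]
  rcases (dist_nonneg : 0 ≤ dist c d).eq_or_lt with hcd | hl
  · obtain rfl : c = d := dist_eq_zero.1 hcd.symm
    simp
  set q := dist a b
  set l := dist c d
  set t := q / (q + l)
  have ht : t ∈ Icc (0 : ℝ) 1 :=
    ⟨by positivity, (div_le_one (by positivity)).2 (by linarith)⟩
  set m := G.geo a d t
  have hb := hX.dist_geo_sq_le G b a d ht
  have hc := hX.dist_geo_sq_le G c a d ht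
  rw [dist_comm b a] at hb
  have htri : dist b c ≤ dist b m + dist c m :=
    (dist_triangle b m c).trans_eq (by rw [dist_comm m])
  have hsq : dist b c ^ 2 * (q * l) ≤ (q + l) * (l * dist b m ^ 2 + q * dist c m ^ 2) := by
    nlinarith [sq_nonneg (l * dist b m - q * dist c m), pow_le_pow_left₀ dist_nonneg htri 2,
      mul_pos hq hl]
  have hweights :
      (q + l) * (l * ((1 - t) * q ^ 2 + t * dist b d ^ 2 - t * (1 - t) * dist a d ^ 2) +
        q * ((1 - t) * dist c a ^ 2 + t * l ^ 2 - t * (1 - t) * dist a d ^ 2)) =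
      q * l * (dist a c ^ 2 + dist b d ^ 2 + 2 * q * l - dist a d ^ 2) := by
    rw [dist_comm c a]
    simp only [t]
    field_simp
    ring
  have hlegs : (q + l) * (l * dist b m ^ 2 + q * dist c m ^ 2) ≤
      q * l * (dist a c ^ 2 + dist b d ^ 2 + 2 * q * l - dist a d ^ 2) := by
    rw [← hweights]; gcongr
  have := le_of_mul_le_mul_left (by linarith : q * l * dist b c ^ 2 ≤
    q * l * (dist a c ^ 2 + dist b d ^ 2 + 2 * q * l - dist a d ^ 2)) (mul_pos hq hl)
  linarith

end CAT0

def IsNearestPoint (A : Set X) (x p : X) : Prop :=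
  p ∈ A ∧ ∀ z ∈ A, dist x p ≤ dist x z

namespace IsNearestPoint

variable {A : Set X} {x y p q : X}

theorem dist_sq_add_dist_sq_le (hp : IsNearestPoint A x p) (hX : CAT0 X) {G : Geodesic X}
    (hA : G.IsConvex A) {b : X} (hb : b ∈ A) : dist x p ^ 2 + dist p b ^ 2 ≤ dist x b ^ 2 := by
  have key : ∀ t ∈ Ioc (0 : ℝ) 1, dist x p ^ 2 + (1 - t) * dist p b ^ 2 ≤ dist x b ^ 2 := by
    rintro t ⟨ht₀, ht₁⟩
    have hpt := pow_le_pow_left₀ dist_nonneg (hp.2 _ (hA p hp.1 b hb t ⟨ht₀.le, ht₁⟩)) 2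
    have hcvx := hX.dist_geo_sq_le G x p b ⟨ht₀.le, ht₁⟩
    refine le_of_mul_le_mul_left ?_ ht₀
    linear_combination hpt + hcvx
  have hlim : Tendsto (fun t : ℝ => dist x p ^ 2 + (1 - t) * dist p b ^ 2) (𝓝[>] 0)
      (𝓝 (dist x p ^ 2 + (1 - 0) * dist p b ^ 2)) :=
    (Continuous.tendsto (by fun_prop) 0).mono_left nhdsWithin_le_nhds
  simpa using le_of_tendsto hlim (eventually_of_mem (Ioc_mem_nhdsGT one_pos) key)

theorem eq (hp : IsNearestPoint A x p) (hq : IsNearestPoint A x q) (hX : CAT0 X)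
    {G : Geodesic X} (hA : G.IsConvex A) : p = q := by
  have h₁ := hp.dist_sq_add_dist_sq_le hX hA hq.1
  have h₂ := pow_le_pow_left₀ dist_nonneg (hq.2 p hp.1) 2
  exact dist_le_zero.1 (by nlinarith [dist_nonneg (x := p) (y := q)])

theorem dist_sq_le (hp : IsNearestPoint A x p) (hq : IsNearestPoint A y q) (hX : CAT0 X)
    {G : Geodesic X} (hA : G.IsConvex A) :
    dist p q ^ 2 ≤ dist x y ^ 2 - (dist x p - dist y q) ^ 2 := by
  have h₁ := hp.dist_sq_add_dist_sq_le hX hA hq.1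
  have h₂ := hq.dist_sq_add_dist_sq_le hX hA hp.1
  have h₃ := hX.dist_sq_add_dist_sq_le G x p y q
  rw [dist_comm q p] at h₂
  rw [dist_comm p y] at h₃
  linear_combination h₁ + h₂ + h₃

theorem dist_le (hp : IsNearestPoint A x p) (hq : IsNearestPoint A y q) (hX : CAT0 X)
    {G : Geodesic X} (hA : G.IsConvex A) : dist p q ≤ dist x y :=
  (pow_le_pow_iff_left₀ dist_nonneg dist_nonneg two_ne_zero).1 <| by
    nlinarith [hp.dist_sq_le hq hX hA]

end IsNearestPoint

noncomputable def asymptoticRadius (s : ℕ → X) (z : X) : ℝ :=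
  limsup (fun n => dist z (s n)) atTop

section AsymptoticRadius

variable {s t : ℕ → X}

theorem isBoundedUnder_dist (hs : Bornology.IsBounded (range s)) (z : X) :
    IsBoundedUnder (· ≤ ·) atTop fun n => dist z (s n) := by
  obtain ⟨r, hr⟩ := hs.subset_closedBall z
  exact isBoundedUnder_of ⟨r, fun n => mem_closedBall'.1 (hr (mem_range_self n))⟩

theorem isCoboundedUnder_dist (s : ℕ → X) (z : X) :
    IsCoboundedUnder (· ≤ ·) atTop fun n => dist z (s n) :=
  isCoboundedUnder_le_of_le atTop fun _ => dist_nonneg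

theorem asymptoticRadius_nonneg (hs : Bornology.IsBounded (range s)) (z : X) :
    0 ≤ asymptoticRadius s z :=
  le_limsup_of_frequently_le (Frequently.of_forall fun _ => dist_nonneg) (isBoundedUnder_dist hs z)

theorem asymptoticRadius_le_of_dist_le (ht : Bornology.IsBounded (range t)) {z w : X}
    {e : ℕ → ℝ} {c : ℝ} (he : Tendsto e atTop (𝓝 c))
    (h : ∀ n, dist z (s n) ≤ dist w (t n) + e n) :
    asymptoticRadius s z ≤ asymptoticRadius t w + c :=
  calc asymptoticRadius s z ≤ limsup (fun n => dist w (t n) + e n) atTop :=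
        limsup_le_limsup (Eventually.of_forall h) (isCoboundedUnder_dist s z)
          (isBoundedUnder_le_add (isBoundedUnder_dist ht w) he.isBoundedUnder_le)
    _ ≤ asymptoticRadius t w + limsup e atTop :=
        limsup_add_le (isBoundedUnder_of ⟨0, fun _ => dist_nonneg⟩) (isBoundedUnder_dist ht w)
          he.isCoboundedUnder_le he.isBoundedUnder_le
    _ = asymptoticRadius t w + c := by rw [he.limsup_eq]

theorem asymptoticRadius_le_add_dist (hs : Bornology.IsBounded (range s)) (z w : X) :
    asymptoticRadius s z ≤ asymptoticRadius s w + dist z w :=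
  asymptoticRadius_le_of_dist_le hs tendsto_const_nhds fun n =>
    (dist_triangle z w (s n)).trans_eq (add_comm _ _)

theorem CAT0.asymptoticRadius_geo_half_sq_le (hX : CAT0 X) (G : Geodesic X)
    (hs : Bornology.IsBounded (range s)) (z w : X) :
    asymptoticRadius s (G.geo z w (1 / 2)) ^ 2 ≤
      asymptoticRadius s z ^ 2 / 2 + asymptoticRadius s w ^ 2 / 2 - dist z w ^ 2 / 4 := by
  set m := G.geo z w (1 / 2) with hm
  set K : ℝ → ℝ := fun ε =>
    (asymptoticRadius s z + ε) ^ 2 / 2 + (asymptoticRadius s w + ε) ^ 2 / 2 - dist z w ^ 2 / 4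
  have key : ∀ ε > 0, asymptoticRadius s m ^ 2 ≤ K ε := by
    intro ε hε
    have hK : ∀ᶠ n in atTop, dist m (s n) ^ 2 ≤ K ε := by
      filter_upwards
        [eventually_lt_of_limsup_lt (lt_add_of_pos_right _ hε) (isBoundedUnder_dist hs z),
        eventually_lt_of_limsup_lt (lt_add_of_pos_right _ hε) (isBoundedUnder_dist hs w)]
        with n hz hw
      have hcvx := hX.dist_geo_sq_le G (s n) z w (t := 1 / 2) ⟨by norm_num, by norm_num⟩
      rw [← hm, dist_comm (s n), dist_comm (s n), dist_comm (s n)] at hcvx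
      have hz' : dist z (s n) ^ 2 ≤ (asymptoticRadius s z + ε) ^ 2 :=
        pow_le_pow_left₀ dist_nonneg hz.le 2
      have hw' : dist w (s n) ^ 2 ≤ (asymptoticRadius s w + ε) ^ 2 :=
        pow_le_pow_left₀ dist_nonneg hw.le 2
      simp only [K]
      linarith
    obtain ⟨n, hn⟩ := hK.exists
    have hK₀ : 0 ≤ K ε := (sq_nonneg _).trans hn
    have : asymptoticRadius s m ≤ √(K ε) :=
      limsup_le_of_le (isCoboundedUnder_dist s m)
        (hK.mono fun n hn => (Real.le_sqrt dist_nonneg hK₀).2 hn)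
    calc asymptoticRadius s m ^ 2 ≤ √(K ε) ^ 2 :=
          pow_le_pow_left₀ (asymptoticRadius_nonneg hs m) this 2
      _ = K ε := Real.sq_sqrt hK₀
  have hlim : Tendsto K (𝓝[>] 0) (𝓝 (K 0)) :=
    (Continuous.tendsto (by fun_prop) 0).mono_left nhdsWithin_le_nhds
  simpa [K] using ge_of_tendsto hlim (eventually_nhdsWithin_of_forall key)

theorem IsAsymptoticCenter.eq {u v : X} (hu : IsAsymptoticCenter s u)
    (hv : IsAsymptoticCenter s v) (hX : CAT0 X) (G : Geodesic X)
    (hs : Bornology.IsBounded (range s)) : u = v := by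
  have hmid := hX.asymptoticRadius_geo_half_sq_le G hs u v
  have h₁ : asymptoticRadius s u ≤ asymptoticRadius s (G.geo u v (1 / 2)) := hu _
  have h₂ : asymptoticRadius s u = asymptoticRadius s v := le_antisymm (hu v) (hv u)
  have h₀ := asymptoticRadius_nonneg hs u
  exact dist_le_zero.1 (by nlinarith [dist_nonneg (x := u) (y := v)])

theorem CAT0.exists_isAsymptoticCenter [CompleteSpace X] (hX : CAT0 X) (G : Geodesic X)
    (hs : Bornology.IsBounded (range s)) : ∃ u, IsAsymptoticCenter s u := by
  have : Nonempty X := ⟨s 0⟩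
  set σ := ⨅ z, asymptoticRadius s z ^ 2
  have hσ : ∀ z, σ ≤ asymptoticRadius s z ^ 2 :=
    ciInf_le ⟨0, by rintro _ ⟨y, rfl⟩; positivity⟩
  have hmin : ∀ k : ℕ, ∃ z, asymptoticRadius s z ^ 2 < σ + 1 / (k + 1) := fun k =>
    exists_lt_of_ciInf_lt (lt_add_of_pos_right σ (by positivity))
  choose z hz using hmin
  -- a minimizing sequence is Cauchy by the CN inequality for asymptotic radii
  have hcauchy : CauchySeq z := by
    refine cauchySeq_of_le_tendsto_0 (fun N : ℕ => √(4 * (1 / ((N : ℝ) + 1)))) ?_ ?_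
    · intro j k N hj hk
      have hmid := hX.asymptoticRadius_geo_half_sq_le G hs (z j) (z k)
      have hj' : 1 / ((j : ℝ) + 1) ≤ 1 / ((N : ℝ) + 1) :=
        one_div_le_one_div_of_le (by positivity) (by exact_mod_cast Nat.add_le_add_right hj 1)
      have hk' : 1 / ((k : ℝ) + 1) ≤ 1 / ((N : ℝ) + 1) :=
        one_div_le_one_div_of_le (by positivity) (by exact_mod_cast Nat.add_le_add_right hk 1)
      refine (Real.le_sqrt dist_nonneg (by positivity)).2 ?_
      linarith [hz j, hz k, hσ (G.geo (z j) (z k) (1 / 2))]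
    · simpa using (tendsto_one_div_add_atTop_nhds_zero_nat.const_mul 4).sqrt
  obtain ⟨u, hu⟩ := cauchySeq_tendsto_of_complete hcauchy
  have hcont : Continuous (asymptoticRadius s) :=
    (LipschitzWith.of_le_add (asymptoticRadius_le_add_dist hs)).continuous
  have hσu : asymptoticRadius s u ^ 2 = σ := by
    refine tendsto_nhds_unique (((hcont.tendsto u).comp hu).pow 2) ?_
    refine tendsto_of_tendsto_of_tendsto_of_le_of_le tendsto_const_nhds ?_ (fun k => hσ _)
      fun k => (hz k).le
    simpa using tendsto_one_div_add_atTop_nhds_zero_nat.const_add σ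
  exact ⟨u, fun y => (pow_le_pow_iff_left₀ (asymptoticRadius_nonneg hs u)
    (asymptoticRadius_nonneg hs y) two_ne_zero).1 (hσu ▸ hσ y)⟩

end AsymptoticRadius

theorem IsAsymptoticCenter.isFixedPt {T : X → X} (hT : ∀ x y, dist (T x) (T y) ≤ dist x y)
    {s : ℕ → X} {v : X} (hv : IsAsymptoticCenter s v) (hX : CAT0 X) (G : Geodesic X)
    (hs : Bornology.IsBounded (range s))
    (hTs : Tendsto (fun n => dist (T (s n)) (s n)) atTop (𝓝 0)) : IsFixedPt T v := by
  have hTv : IsAsymptoticCenter s (T v) := fun y =>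
    le_trans ((asymptoticRadius_le_of_dist_le hs hTs fun n =>
      (dist_triangle _ (T (s n)) _).trans (by gcongr; exact hT v (s n))).trans_eq (add_zero _))
      (hv y)
  exact hTv.eq hv hX G hs

/-- Opial's lemma for Δ-convergence. -/
theorem CAT0.exists_deltaConvergesTo_of_tendsto_dist [CompleteSpace X] (hX : CAT0 X)
    (G : Geodesic X) {s : ℕ → X} {F : Set X} (hs : Bornology.IsBounded (range s))
    (hF : ∀ v ∈ F, ∃ L, Tendsto (fun n => dist v (s n)) atTop (𝓝 L))
    (hcenter : ∀ φ, StrictMono φ → ∀ v, IsAsymptoticCenter (s ∘ φ) v → v ∈ F) :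
    ∃ u ∈ F, DeltaConvergesTo s u := by
  obtain ⟨u, hu⟩ := hX.exists_isAsymptoticCenter G hs
  have huF : u ∈ F := hcenter id strictMono_id u hu
  obtain ⟨Lu, hLu⟩ := hF u huF
  have key : ∀ φ, StrictMono φ → ∀ v, IsAsymptoticCenter (s ∘ φ) v → v = u := by
    intro φ hφ v hv
    obtain ⟨Lv, hLv⟩ := hF v (hcenter φ hφ v hv)
    have hLvφ : Tendsto (fun n => dist v ((s ∘ φ) n)) atTop (𝓝 Lv) :=
      hLv.comp hφ.tendsto_atTop
    have hLuφ : Tendsto (fun n => dist u ((s ∘ φ) n)) atTop (𝓝 Lu) :=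
      hLu.comp hφ.tendsto_atTop
    have hvu := hv u
    rw [hLvφ.limsup_eq, hLuφ.limsup_eq] at hvu
    refine IsAsymptoticCenter.eq (fun y => ?_) hu hX G hs
    rw [hLv.limsup_eq]
    exact hvu.trans (hLu.limsup_eq ▸ hu y)
  refine ⟨u, huF, fun φ hφ => ⟨?_, key φ hφ⟩⟩
  obtain ⟨v, hv⟩ := hX.exists_isAsymptoticCenter G (hs.subset (range_comp_subset_range φ s))
  exact key φ hφ v hv ▸ hv

theorem DeltaConvergesTo.comp_strictMono {s : ℕ → X} {u : X} (h : DeltaConvergesTo s u)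
    {ψ : ℕ → ℕ} (hψ : StrictMono ψ) : DeltaConvergesTo (s ∘ ψ) u :=
  fun φ hφ => h (ψ ∘ φ) (hψ.comp hφ)

theorem isBounded_range_of_antitone_dist {s : ℕ → X} {v : X}
    (h : Antitone fun n => dist v (s n)) : Bornology.IsBounded (range s) :=
  (isBounded_iff_subset_closedBall v).2
    ⟨dist v (s 0), range_subset_iff.2 fun n => mem_closedBall'.2 (h (Nat.zero_le n))⟩

section Picard

variable {T : X → X} {s : ℕ → X}

theorem antitone_dist_of_isFixedPt (hT : ∀ x y, dist (T x) (T y) ≤ dist x y)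
    (hs : ∀ n, s (n + 1) = T (s n)) {v : X} (hv : IsFixedPt T v) :
    Antitone fun n => dist v (s n) :=
  antitone_nat_of_succ_le fun n => by simpa only [hs n, hv.eq] using hT v (s n)

theorem CAT0.exists_isFixedPt_deltaConvergesTo [CompleteSpace X] (hX : CAT0 X) (G : Geodesic X)
    (hT : ∀ x y, dist (T x) (T y) ≤ dist x y) (hs : ∀ n, s (n + 1) = T (s n))
    (hfix : ∃ v, IsFixedPt T v)
    (hreg : Tendsto (fun n => dist (s n) (s (n + 1))) atTop (𝓝 0)) :
    ∃ u, IsFixedPt T u ∧ DeltaConvergesTo s u := by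
  obtain ⟨v, hv⟩ := hfix
  have hsb := isBounded_range_of_antitone_dist (antitone_dist_of_isFixedPt hT hs hv)
  refine hX.exists_deltaConvergesTo_of_tendsto_dist G (F := fixedPoints T) hsb
    (fun w hw => ⟨_, tendsto_atTop_ciInf (antitone_dist_of_isFixedPt hT hs hw)
      ⟨0, by rintro _ ⟨n, rfl⟩; exact dist_nonneg⟩⟩) fun φ hφ w hw => ?_
  refine hw.isFixedPt hT hX G (hsb.subset (range_comp_subset_range φ s)) ?_
  exact (hreg.comp hφ.tendsto_atTop).congr fun n => by simp [hs, dist_comm]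

end Picard

theorem exists_isCompact_closedBall_inter {A : Set X} [LocallyCompactSpace A] {u : X}
    (hu : u ∈ A) : ∃ ε > 0, ∃ K, IsCompact K ∧ closedBall u ε ∩ A ⊆ K := by
  obtain ⟨K, hK, hKu⟩ := exists_compact_mem_nhds (⟨u, hu⟩ : A)
  obtain ⟨ε, hε, hball⟩ := Metric.mem_nhds_iff.1 hKu
  refine ⟨ε / 2, half_pos hε, _, hK.image continuous_subtype_val,
    fun w ⟨hw, hwA⟩ => ⟨⟨w, hwA⟩, hball ?_, rfl⟩⟩
  rw [mem_ball, Subtype.dist_eq]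
  exact (mem_closedBall.1 hw).trans_lt (half_lt_self hε)

/-- If `dist u (s n)` decreased to `L > 0`, the points of `[u, s n]` at a small distance `δ` from
`u` would accumulate, inside a compact piece of `A`, at a point whose asymptotic radius along the
corresponding subsequence is at most `L - δ`, less than that of `u`. -/
theorem DeltaConvergesTo.tendsto_of_antitone {G : Geodesic X} {A : Set X} (hA : G.IsConvex A)
    [LocallyCompactSpace A] {s : ℕ → X} {u : X} (hΔ : DeltaConvergesTo s u)
    (hsA : ∀ n, s n ∈ A) (hu : u ∈ A) (hanti : Antitone fun n => dist u (s n)) :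
    Tendsto s atTop (𝓝 u) := by
  have hbdd : BddBelow (range fun n => dist u (s n)) :=
    ⟨0, by rintro _ ⟨n, rfl⟩; exact dist_nonneg⟩
  have hL := tendsto_atTop_ciInf hanti hbdd
  set L := ⨅ n, dist u (s n)
  suffices L = 0 by
    rw [tendsto_iff_dist_tendsto_zero]
    simpa only [dist_comm, this] using hL
  by_contra hL0
  have hLpos : 0 < L := (le_ciInf fun n => dist_nonneg).lt_of_ne' hL0
  obtain ⟨ε, hε, K, hK, hsub⟩ := exists_isCompact_closedBall_inter hu
  set δ := min ε (L / 2)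
  have hδ : 0 < δ := lt_min hε (half_pos hLpos)
  have hδs : ∀ n, δ < dist u (s n) := fun n =>
    (min_le_right _ _).trans_lt ((half_lt_self hLpos).trans_le (ciInf_le hbdd n))
  have ht : ∀ n, δ / dist u (s n) ∈ Icc (0 : ℝ) 1 := fun n =>
    ⟨by positivity, (div_le_one (hδ.trans (hδs n))).2 (hδs n).le⟩
  set z := fun n => G.geo u (s n) (δ / dist u (s n))
  have hzu : ∀ n, dist u (z n) = δ := fun n => by
    rw [G.dist_geo_left _ _ (ht n), div_mul_cancel₀ _ (hδ.trans (hδs n)).ne']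
  have hzs : ∀ n, dist (z n) (s n) = dist u (s n) - δ := fun n => by
    rw [G.dist_geo_right _ _ (ht n), sub_mul, one_mul, div_mul_cancel₀ _ (hδ.trans (hδs n)).ne']
  obtain ⟨z', -, φ, hφ, hz'⟩ := hK.tendsto_subseq fun n =>
    hsub ⟨mem_closedBall'.2 ((hzu n).trans_le (min_le_left _ _)),
      hA u hu (s n) (hsA n) _ (ht n)⟩
  have hsφ := (isBounded_range_of_antitone_dist hanti).subset (range_comp_subset_range φ s)
  have hz'r := asymptoticRadius_le_of_dist_le (s := s ∘ φ) (z := z') (w := u) hsφ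
    ((tendsto_iff_dist_tendsto_zero.1 hz').sub_const δ) fun n => by
      have := dist_triangle z' (z (φ n)) (s (φ n))
      rw [hzs, dist_comm z' (z (φ n))] at this
      simp only [Function.comp_apply]
      linarith
  have := (hΔ φ hφ).1 z'
  change asymptoticRadius (s ∘ φ) u ≤ asymptoticRadius (s ∘ φ) z' at this
  linarith

section AlternatingProjections

variable {G : Geodesic X} {A B : Set X} {PA PB : X → X}

theorem CAT0.tendsto_dist_succ_alternating (hX : CAT0 X) (hA : G.IsConvex A)
    (hPA : ∀ x, IsNearestPoint A x (PA x)) (hPB : ∀ x, IsNearestPoint B x (PB x))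
    {s : ℕ → X} (hs : ∀ n, s (n + 1) = PA (PB (s n))) :
    Tendsto (fun n => dist (s n) (s (n + 1))) atTop (𝓝 0) := by
  have hsA : ∀ n, s (n + 1) ∈ A := fun n => hs n ▸ (hPA _).1
  -- the gaps `g` and `g'` interlace decreasingly, and the projection inequality of `PA` at
  -- `PB (s (n + 1))` bounds the squared step by the difference of two consecutive gaps squared
  set g := fun n => dist (PB (s n)) (s (n + 1))
  set g' := fun n => dist (s (n + 1)) (PB (s (n + 1)))
  have hg₁ : ∀ n, g (n + 1) ≤ g' n := fun n => by
    simp only [g, g', hs (n + 1), dist_comm (s (n + 1))]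
    exact (hPA _).2 _ (hsA n)
  have hg₂ : ∀ n, g' n ≤ g n := fun n => by
    simp only [g, g', dist_comm (PB (s n))]
    exact (hPB _).2 _ (hPB _).1
  have hg := tendsto_atTop_ciInf (antitone_nat_of_succ_le fun n => (hg₁ n).trans (hg₂ n))
    ⟨0, by rintro _ ⟨n, rfl⟩; exact dist_nonneg⟩
  have hg' := tendsto_of_tendsto_of_tendsto_of_le_of_le
    (hg.comp (tendsto_add_atTop_nat 1)) hg hg₁ hg₂
  have hsq : ∀ n, dist (s (n + 1)) (s (n + 1 + 1)) ^ 2 ≤ g' n ^ 2 - g (n + 1) ^ 2 := fun n => by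
    have := (hPA (PB (s (n + 1)))).dist_sq_add_dist_sq_le hX hA (hsA n)
    rw [← hs, dist_comm (s (n + 1 + 1))] at this
    simp only [g, g', dist_comm (s (n + 1)) (PB _)]
    linarith
  have hsq₀ : Tendsto (fun n => g' n ^ 2 - g (n + 1) ^ 2) atTop (𝓝 0) := by
    simpa using (hg'.pow 2).sub ((hg.comp (tendsto_add_atTop_nat 1)).pow 2)
  refine (tendsto_add_atTop_iff_nat 1).1 (squeeze_zero (fun n => dist_nonneg) (fun n => ?_)
    (by simpa using hsq₀.sqrt))
  exact (Real.le_sqrt dist_nonneg ((sq_nonneg _).trans (hsq n))).2 (hsq n)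

/-- Fixed pairs of the alternating projections are at the distance of any best approximation
pair. -/
theorem CAT0.dist_eq_of_isNearestPoint (hX : CAT0 X) (hA : G.IsConvex A) (hB : G.IsConvex B)
    {u b a₀ b₀ : X} (hb : IsNearestPoint B u b) (hu : IsNearestPoint A b u)
    (hb₀ : IsNearestPoint B a₀ b₀) (ha₀ : IsNearestPoint A b₀ a₀) :
    dist u b = dist a₀ b₀ := by
  have hdist : dist b b₀ = dist u a₀ :=
    le_antisymm (hb.dist_le hb₀ hX hB) (hu.dist_le ha₀ hX hA)
  have hfirm := hb.dist_sq_le hb₀ hX hB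
  rw [hdist] at hfirm
  nlinarith [sq_nonneg (dist u b - dist a₀ b₀)]

theorem isAsymptoticCenter_of_alternating {P Q : X → X}
    (hP : ∀ a b, dist (P a) (P b) ≤ dist a b) (hQ : ∀ a b, dist (Q a) (Q b) ≤ dist a b)
    {x y : ℕ → X} (hxb : Bornology.IsBounded (range x)) (hyb : Bornology.IsBounded (range y))
    (hy : ∀ n, y n = P (x n)) (hx : ∀ n, x (n + 1) = Q (y n)) {u : X}
    (hu : IsAsymptoticCenter x u) : IsAsymptoticCenter y (P u) := fun z =>
  calc asymptoticRadius y (P u) ≤ asymptoticRadius x u + 0 :=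
        asymptoticRadius_le_of_dist_le hxb tendsto_const_nhds fun n => by
          rw [hy, add_zero]; exact hP _ _
    _ ≤ asymptoticRadius x (Q z) := by rw [add_zero]; exact hu (Q z)
    _ = asymptoticRadius (fun n => x (n + 1)) (Q z) :=
        (limsup_nat_add (fun n => dist (Q z) (x n)) 1).symm
    _ ≤ asymptoticRadius y z + 0 :=
        asymptoticRadius_le_of_dist_le hyb tendsto_const_nhds fun n => by
          rw [hx, add_zero]; exact hQ _ _
    _ = asymptoticRadius y z := add_zero _

theorem CAT0.deltaConvergesTo_alternating [CompleteSpace X] (hX : CAT0 X) (hA : G.IsConvex A)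
    (hB : G.IsConvex B) (hPA : ∀ x, IsNearestPoint A x (PA x))
    (hPB : ∀ x, IsNearestPoint B x (PB x)) {a₀ b₀ : X} (hb₀ : IsNearestPoint B a₀ b₀)
    (ha₀ : IsNearestPoint A b₀ a₀) {x y : ℕ → X} (hy : ∀ n, y n = PB (x n))
    (hx : ∀ n, x (n + 1) = PA (y n)) :
    ∃ u, PA (PB u) = u ∧ DeltaConvergesTo x u ∧ DeltaConvergesTo y (PB u) := by
  have hPAne : ∀ a b, dist (PA a) (PA b) ≤ dist a b := fun a b => (hPA a).dist_le (hPA b) hX hA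
  have hPBne : ∀ a b, dist (PB a) (PB b) ≤ dist a b := fun a b => (hPB a).dist_le (hPB b) hX hB
  have hPBa₀ : PB a₀ = b₀ := (hPB a₀).eq hb₀ hX hB
  have hPAb₀ : PA b₀ = a₀ := (hPA b₀).eq ha₀ hX hA
  have hxs : ∀ n, x (n + 1) = (PA ∘ PB) (x n) := fun n => by rw [hx, hy]; rfl
  have hys : ∀ n, y (n + 1) = (PB ∘ PA) (y n) := fun n => by rw [hy, hx]; rfl
  have hT : ∀ a b, dist ((PA ∘ PB) a) ((PA ∘ PB) b) ≤ dist a b := fun a b =>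
    (hPAne _ _).trans (hPBne a b)
  have hT' : ∀ a b, dist ((PB ∘ PA) a) ((PB ∘ PA) b) ≤ dist a b := fun a b =>
    (hPBne _ _).trans (hPAne a b)
  have ha₀fix : IsFixedPt (PA ∘ PB) a₀ := by simp [IsFixedPt, hPBa₀, hPAb₀]
  have hb₀fix : IsFixedPt (PB ∘ PA) b₀ := by simp [IsFixedPt, hPBa₀, hPAb₀]
  obtain ⟨u, hu, hxu⟩ := hX.exists_isFixedPt_deltaConvergesTo G hT hxs ⟨a₀, ha₀fix⟩
    (hX.tendsto_dist_succ_alternating hA hPA hPB hxs)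
  obtain ⟨w, -, hyw⟩ := hX.exists_isFixedPt_deltaConvergesTo G hT' hys ⟨b₀, hb₀fix⟩
    (hX.tendsto_dist_succ_alternating hB hPB hPA hys)
  have hw : PB u = w := (hyw id strictMono_id).2 _ <| isAsymptoticCenter_of_alternating hPBne hPAne
    (isBounded_range_of_antitone_dist (antitone_dist_of_isFixedPt hT hxs ha₀fix))
    (isBounded_range_of_antitone_dist (antitone_dist_of_isFixedPt hT' hys hb₀fix)) hy hx
    (hxu id strictMono_id).1
  exact ⟨u, hu, hxu, hw ▸ hyw⟩

theorem CAT0.tendsto_alternating (hX : CAT0 X) (hA : G.IsConvex A) (hB : G.IsConvex B)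
    (hPA : ∀ x, IsNearestPoint A x (PA x)) (hPB : ∀ x, IsNearestPoint B x (PB x))
    {x y : ℕ → X} (hy : ∀ n, y n = PB (x n)) (hx : ∀ n, x (n + 1) = PA (y n)) {u : X}
    (hu : PA (PB u) = u) (hxu : DeltaConvergesTo x u) (hyu : DeltaConvergesTo y (PB u))
    (hloc : LocallyCompactSpace A ∨ LocallyCompactSpace B) :
    Tendsto x atTop (𝓝 u) ∧ Tendsto y atTop (𝓝 (PB u)) := by
  have h₁ : ∀ n, dist (PB u) (y n) ≤ dist u (x n) := fun n => by
    rw [hy]; exact (hPB u).dist_le (hPB _) hX hB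
  have h₂ : ∀ n, dist u (x (n + 1)) ≤ dist (PB u) (y n) := fun n => by
    rw [hx]; nth_rw 1 [← hu]; exact (hPA _).dist_le (hPA _) hX hA
  have hxy : Tendsto x atTop (𝓝 u) ↔ Tendsto y atTop (𝓝 (PB u)) := by
    rw [tendsto_iff_dist_tendsto_zero (f := x), tendsto_iff_dist_tendsto_zero (f := y)]
    simp only [dist_comm _ u, dist_comm _ (PB u)]
    exact ⟨fun h => squeeze_zero (fun _ => dist_nonneg) h₁ h,
      fun h => (tendsto_add_atTop_iff_nat 1).1 (squeeze_zero (fun _ => dist_nonneg) h₂ h)⟩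
  rcases hloc with hloc | hloc
  · have hx' := (hxu.comp_strictMono (strictMono_id.add_const 1)).tendsto_of_antitone hA
      (fun n => (hx n ▸ (hPA _).1 : x (n + 1) ∈ A)) (hu ▸ (hPA (PB u)).1)
      (antitone_nat_of_succ_le fun n => (h₂ (n + 1)).trans (h₁ (n + 1)))
    have := (tendsto_add_atTop_iff_nat 1).1 hx'
    exact ⟨this, hxy.1 this⟩
  · have hy' := hyu.tendsto_of_antitone hB (fun n => hy n ▸ (hPB _).1) (hPB u).1
      (antitone_nat_of_succ_le fun n => (h₁ (n + 1)).trans (h₂ n))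
    exact ⟨hxy.2 hy', hy'⟩

end AlternatingProjections

end

theorem alternating_projections_best_approximation_general {X : Type*} [MetricSpace X]
    [CompleteSpace X] (G : Geodesic X) (hX : CAT0 X)
    (A B : Set X)
    (hAconv : ∀ x ∈ A, ∀ y ∈ A, ∀ t ∈ Set.Icc (0:ℝ) 1, G.geo x y t ∈ A)
    (hBconv : ∀ x ∈ B, ∀ y ∈ B, ∀ t ∈ Set.Icc (0:ℝ) 1, G.geo x y t ∈ B)
    (hS : ∃ a ∈ A, ∃ b ∈ B, ∀ a' ∈ A, ∀ b' ∈ B, dist a b ≤ dist a' b')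
    (PA PB : X → X)
    (hPA : ∀ x : X, PA x ∈ A ∧ ∀ z ∈ A, dist x (PA x) ≤ dist x z)
    (hPB : ∀ x : X, PB x ∈ B ∧ ∀ z ∈ B, dist x (PB x) ≤ dist x z)
    (x y : ℕ → X)
    (hy : ∀ n : ℕ, y n = PB (x n))
    (hx : ∀ n : ℕ, x (n + 1) = PA (y n)) :
    ∃ a ∈ A, ∃ b ∈ B, (∀ a' ∈ A, ∀ b' ∈ B, dist a b ≤ dist a' b') ∧
      DeltaConvergesTo x a ∧ DeltaConvergesTo y b ∧
      ((LocallyCompactSpace A ∨ LocallyCompactSpace B) →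
        Filter.Tendsto x Filter.atTop (nhds a) ∧
        Filter.Tendsto y Filter.atTop (nhds b)) := by
  obtain ⟨a₀, ha₀, b₀, hb₀, hbest⟩ := hS
  have hb₀' : IsNearestPoint B a₀ b₀ := ⟨hb₀, hbest a₀ ha₀⟩
  have ha₀' : IsNearestPoint A b₀ a₀ :=
    ⟨ha₀, fun z hz => by simpa only [dist_comm b₀] using hbest z hz b₀ hb₀⟩
  obtain ⟨u, hu, hxu, hyu⟩ :=
    hX.deltaConvergesTo_alternating hAconv hBconv hPA hPB hb₀' ha₀' hy hx
  have hPBu : IsNearestPoint A (PB u) u := by simpa only [IsNearestPoint, hu] using hPA (PB u)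
  have hdist := hX.dist_eq_of_isNearestPoint hAconv hBconv (hPB u) hPBu hb₀' ha₀'
  exact ⟨u, hPBu.1, PB u, (hPB u).1, fun a' ha' b' hb' => hdist ▸ hbest a' ha' b' hb',
    hxu, hyu, hX.tendsto_alternating hAconv hBconv hPA hPB hy hx hu hxu hyu⟩

/-- Δ-convergence of the alternating projection method to a best approximation pair of two
nonempty closed convex sets `A`, `B` (for which a best approximation pair exists) in a
complete CAT(0) space, with strong convergence when `A` or `B` is locally compact. -/
theorem alternating_projections_best_approximation {X : Type*} [MetricSpace X]
    [CompleteSpace X] (G : Geodesic X) (hX : CAT0 X)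
    (A B : Set X) (hAne : A.Nonempty) (hBne : B.Nonempty)
    (hAcl : IsClosed A) (hBcl : IsClosed B)
    (hAconv : ∀ x ∈ A, ∀ y ∈ A, ∀ t ∈ Set.Icc (0:ℝ) 1, G.geo x y t ∈ A)
    (hBconv : ∀ x ∈ B, ∀ y ∈ B, ∀ t ∈ Set.Icc (0:ℝ) 1, G.geo x y t ∈ B)
    (hS : ∃ a ∈ A, ∃ b ∈ B, ∀ a' ∈ A, ∀ b' ∈ B, dist a b ≤ dist a' b')
    (PA PB : X → X)
    (hPA : ∀ x : X, PA x ∈ A ∧ ∀ z ∈ A, dist x (PA x) ≤ dist x z)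
    (hPB : ∀ x : X, PB x ∈ B ∧ ∀ z ∈ B, dist x (PB x) ≤ dist x z)
    (x₀ : X) (x y : ℕ → X) (hx0 : x 0 = x₀)
    (hy : ∀ n : ℕ, y n = PB (x n))
    (hx : ∀ n : ℕ, x (n + 1) = PA (y n)) :
    ∃ a ∈ A, ∃ b ∈ B, (∀ a' ∈ A, ∀ b' ∈ B, dist a b ≤ dist a' b') ∧
      DeltaConvergesTo x a ∧ DeltaConvergesTo y b ∧
      ((LocallyCompactSpace A ∨ LocallyCompactSpace B) →
        Filter.Tendsto x Filter.atTop (nhds a) ∧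
        Filter.Tendsto y Filter.atTop (nhds b)) :=
  alternating_projections_best_approximation_general G hX A B hAconv hBconv hS PA PB hPA hPB x y hy
    hx
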